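/- Let ζ₁ and ζ₂ be two functions ℝ^d → ℝ, each Lipschitz continuous with compact support and satisfying ∑_{ξ∈ℤ^d} ζᵢ(x−ξ)(a + b·ξ) = a + b·x for all x ∈ ℝ^d, a ∈ ℝ, b ∈ ℝ^d (properties (Z1)–(Z3)). Set ζ̃ᵢ := ζᵢ ∗ ζᵢ. Then for every polynomial p : ℝ^d → ℝ of degree at most 3, the function x ↦ ∑_{ξ∈ℤ^d} p(ξ) (ζ̃₂(x−ξ) − ζ̃₁(x−ξ)) is an affine function of x (i.e. of the form c + g·x for some c ∈ ℝ, g ∈ ℝ^d). -/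

import Mathlib

open MeasureTheory ENNReal NNReal

noncomputable section

/-- The lattice `ℤ^d`. -/
abbrev ZLat (d : ℕ) := Fin d → ℤ

/-- Euclidean space `ℝ^d`. -/
abbrev Euc (d : ℕ) := EuclideanSpace ℝ (Fin d)

/-- Embedding of the lattice `ℤ^d` into `ℝ^d`. -/
def latCast {d : ℕ} (ξ : ZLat d) : Euc d := WithLp.toLp 2 (fun i => (ξ i : ℝ))

/-- Properties (Z1)–(Z3): Lipschitz, compactly supported, reproduces affine functions. -/
structure IsZ123 {d : ℕ} (ζ : Euc d → ℝ) : Prop where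
  lip : ∃ K, LipschitzWith K ζ
  cpt : HasCompactSupport ζ
  ord : ∀ (a : ℝ) (b : Euc d) (x : Euc d),
    ∑' ξ : ZLat d, ζ (x - latCast ξ) * (a + ∑ i, b i * (ξ i : ℝ)) = a + ∑ i, b i * x i

/-- The convolution `ζ̃ = ζ ∗ ζ`. -/
def convAuto {d : ℕ} (ζ : Euc d → ℝ) : Euc d → ℝ := fun x => ∫ y, ζ (x - y) * ζ y

/-!
Write `Q_φ f (x) = ∑_ξ f(ξ) φ(x - ξ)` and `ζ̃ = ζ ∗ ζ`. It suffices that `Q_ζ̃ p - p` is affine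
for each `ζ` and each cubic `p`, and by linearity we may take `p = ∏_{k ∈ s} ⟪b k, ·⟫` with
`#s ≤ 3`. Expanding every factor about `x` gives
`Q_ζ̃ p (x) = ∑_{t ⊆ s} (∏_{k ∈ s \ t} ⟪b k, x⟫) m̃_t(x)` with
`m̃_t(x) = ∑_ξ ζ̃(x - ξ) ∏_{k ∈ t} ⟪b k, ξ - x⟫`. Since `Q_ζ̃ f = ζ ∗ Q_ζ f`, property (Z3) passes
from `ζ` to `ζ̃`, so `m̃_∅ = 1` and `m̃_t = 0` for `#t = 1`; every other term has degree `≤ 1`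
in `x`, provided `m̃_t` is constant.

Expanding once more, `m̃_s(x) = ∑_{t ⊆ s} ∫ g_{s \ t}(x - z) M_t(z) dz`, where `M_t` are the
`ℤ^d`-periodic moments of `ζ` and `g_u(y) = ζ(y) ∏_{k ∈ u} ⟪b k, -y⟫` has periodization `M_u`.
As `#t + #(s \ t) ≤ 3`, one of `M_t`, `M_{s \ t}` has order `≤ 1` and is constant by (Z3). In the
first case the integral is independent of `x` by translation invariance, in the second by unfolding
it over the unit cell, where only the periodization of `g_{s \ t}` survives.
-/
open Bornology Submodule
open scoped RealInnerProductSpace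

variable {d : ℕ}

@[simp]
lemma latCast_apply (ξ : ZLat d) (i : Fin d) : latCast ξ i = (ξ i : ℝ) := rfl

lemma latCast_add (ξ η : ZLat d) : latCast (ξ + η) = latCast ξ + latCast η := by
  ext i; simp [latCast]

lemma latCast_injective : Function.Injective (latCast (d := d)) := fun ξ η h => by
  funext i
  simpa [latCast] using congr_arg (fun v : Euc d => v i) h

lemma mem_span_basisFun_iff (v : Euc d) :
    v ∈ span ℤ (Set.range (EuclideanSpace.basisFun (Fin d) ℝ).toBasis) ↔
      v ∈ Set.range latCast := by
  rw [Module.Basis.mem_span_iff_repr_mem]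
  simp only [OrthonormalBasis.coe_toBasis_repr_apply, EuclideanSpace.basisFun_repr,
    algebraMap_int_eq, Int.coe_castRingHom, Set.mem_range]
  constructor
  · intro h
    choose ξ hξ using h
    exact ⟨ξ, by ext i; exact hξ i⟩
  · rintro ⟨ξ, rfl⟩ i
    exact ⟨ξ i, rfl⟩

def latEquiv :
    ZLat d ≃ (span ℤ (Set.range (EuclideanSpace.basisFun (Fin d) ℝ).toBasis)).toAddSubgroup :=
  Equiv.ofBijective (fun ξ => ⟨latCast ξ, (mem_span_basisFun_iff _).2 ⟨ξ, rfl⟩⟩)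
    ⟨fun _ _ h => latCast_injective (congr_arg Subtype.val h),
      fun v => by
        obtain ⟨ξ, hξ⟩ := (mem_span_basisFun_iff (v : Euc d)).1 v.2
        exact ⟨ξ, Subtype.ext hξ⟩⟩

lemma exists_finset_latCast_mem {s : Set (Euc d)} (hs : IsBounded s) :
    ∃ T : Finset (ZLat d), ∀ ξ, latCast ξ ∈ s → ξ ∈ T := by
  have hfin : {ξ : ZLat d | latCast ξ ∈ s}.Finite :=
    ((ZSpan.setFinite_inter _ hs).preimage latCast_injective.injOn).subset
      fun ξ hξ => ⟨hξ, (mem_span_basisFun_iff _).2 ⟨ξ, rfl⟩⟩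
  exact ⟨hfin.toFinset, fun ξ hξ => hfin.mem_toFinset.2 hξ⟩

/-- The unit cell `[0,1)^d`. -/
def unitCell (d : ℕ) : Set (Euc d) :=
  ZSpan.fundamentalDomain (EuclideanSpace.basisFun (Fin d) ℝ).toBasis

lemma measurableSet_unitCell : MeasurableSet (unitCell d) :=
  ZSpan.fundamentalDomain_measurableSet _

lemma isBounded_unitCell : IsBounded (unitCell d) :=
  ZSpan.fundamentalDomain_isBounded _

lemma volume_unitCell : volume (unitCell d) = 1 := by
  rw [unitCell, measure_congr (ZSpan.fundamentalDomain_ae_parallelepiped _ volume),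
    OrthonormalBasis.coe_toBasis, OrthonormalBasis.volume_parallelepiped]

lemma integrable_comp_add_right {F : Euc d → ℝ} (hF : Continuous F) (hFc : HasCompactSupport F)
    (v : Euc d) : Integrable fun u => F (u + v) :=
  (hF.comp (continuous_add_const v)).integrable_of_hasCompactSupport
    (hFc.comp_homeomorph (Homeomorph.addRight v))

theorem integral_eq_setIntegral_unitCell_tsum {F : Euc d → ℝ} (hF : Continuous F)
    (hFc : HasCompactSupport F) :
    ∫ z, F z = ∫ u in unitCell d, ∑' ξ : ZLat d, F (u + latCast ξ) := by
  have := (latEquiv (d := d)).symm.injective.countable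
  rw [(ZSpan.isAddFundamentalDomain' (EuclideanSpace.basisFun (Fin d) ℝ).toBasis volume
    ).integral_eq_tsum'' F (hF.integrable_of_hasCompactSupport hFc), ← latEquiv.tsum_eq]
  obtain ⟨T, hT⟩ := exists_finset_latCast_mem (hFc.isCompact.isBounded.sub isBounded_unitCell)
  have hvanish : ∀ ξ ∉ T, ∀ u ∈ unitCell d, F (u + latCast ξ) = 0 := fun ξ hξ u hu => by
    by_contra h
    exact hξ (hT ξ ⟨u + latCast ξ, subset_tsupport F h, u, hu, add_sub_cancel_left u _⟩)
  refine (tsum_congr fun ξ => setIntegral_congr_fun measurableSet_unitCell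
    fun u _ => congr_arg F (add_comm _ _)).trans
    (integral_tsum_of_summable_integral_norm
      (fun ξ => (integrable_comp_add_right hF hFc _).integrableOn) ?_)
  refine summable_of_ne_finset_zero (s := T) fun ξ hξ => ?_
  exact setIntegral_eq_zero_of_forall_eq_zero fun u hu => norm_eq_zero.2 (hvanish ξ hξ u hu)

def quasiInterp (φ f : Euc d → ℝ) (x : Euc d) : ℝ :=
  ∑' ξ : ZLat d, f (latCast ξ) * φ (x - latCast ξ)

section CompactSupport

variable {φ : Euc d → ℝ}

lemma exists_finset_comp_sub_latCast_eq_zero (hφ : HasCompactSupport φ) {B : Set (Euc d)}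
    (hB : IsBounded B) : ∃ T : Finset (ZLat d), ∀ ξ ∉ T, ∀ z ∈ B, φ (z - latCast ξ) = 0 := by
  obtain ⟨T, hT⟩ := exists_finset_latCast_mem (hB.sub hφ.isCompact.isBounded)
  exact ⟨T, fun ξ hξ z hz => by_contra fun h =>
    hξ (hT ξ ⟨z, hz, _, subset_tsupport φ h, sub_sub_cancel z _⟩)⟩

lemma summable_quasiInterp (hφ : HasCompactSupport φ) (f : Euc d → ℝ) (x : Euc d) :
    Summable fun ξ : ZLat d => f (latCast ξ) * φ (x - latCast ξ) := by
  obtain ⟨T, hT⟩ := exists_finset_comp_sub_latCast_eq_zero hφ (isBounded_singleton (x := x))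
  exact summable_of_ne_finset_zero fun ξ hξ => by rw [hT ξ hξ x rfl, mul_zero]

lemma quasiInterp_sub {ψ : Euc d → ℝ} (hφ : HasCompactSupport φ) (hψ : HasCompactSupport ψ)
    (f : Euc d → ℝ) (x : Euc d) :
    quasiInterp (fun y => ψ y - φ y) f x = quasiInterp ψ f x - quasiInterp φ f x := by
  simp only [quasiInterp, mul_sub]
  exact (summable_quasiInterp hψ f x).tsum_sub (summable_quasiInterp hφ f x)

lemma quasiInterp_finsetSum {α : Type*} (hφ : HasCompactSupport φ) (S : Finset α) (c : α → ℝ)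
    (p : α → Euc d → ℝ) (x : Euc d) :
    quasiInterp φ (fun v => ∑ n ∈ S, c n * p n v) x = ∑ n ∈ S, c n * quasiInterp φ (p n) x := by
  simp only [quasiInterp, Finset.sum_mul, mul_assoc]
  rw [Summable.tsum_finsetSum fun n _ => (summable_quasiInterp hφ (p n) x).mul_left (c n)]
  simp only [_root_.tsum_mul_left]

lemma continuous_tsum_mul_comp_sub_latCast (hφ : Continuous φ) (hφc : HasCompactSupport φ)
    {w : ZLat d → Euc d → ℝ} (hw : ∀ ξ, Continuous (w ξ)) :
    Continuous fun z => ∑' ξ : ZLat d, w ξ z * φ (z - latCast ξ) := by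
  refine continuous_iff_continuousAt.2 fun z₀ => ?_
  obtain ⟨T, hT⟩ :=
    exists_finset_comp_sub_latCast_eq_zero hφc (Metric.isBounded_ball (x := z₀) (r := 1))
  refine (continuous_finsetSum (f := fun ξ z => w ξ z * φ (z - latCast ξ)) T fun ξ _ =>
    (hw ξ).mul (hφ.comp (continuous_sub_right _))).continuousAt.congr ?_
  filter_upwards [Metric.ball_mem_nhds z₀ one_pos] with z hz
  exact (tsum_eq_sum fun ξ hξ => by rw [hT ξ hξ z hz, mul_zero]).symm

lemma hasCompactSupport_comp_sub_mul (hφc : HasCompactSupport φ) (h : Euc d → ℝ) (x : Euc d) :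
    HasCompactSupport fun z => φ (x - z) * h z :=
  HasCompactSupport.mul_right (f := φ ∘ Homeomorph.subLeft x)
    (hφc.comp_homeomorph (Homeomorph.subLeft x))

lemma integrable_comp_sub_mul (hφ : Continuous φ) (hφc : HasCompactSupport φ) {h : Euc d → ℝ}
    (hh : Continuous h) (x : Euc d) : Integrable fun z => φ (x - z) * h z :=
  ((hφ.comp (continuous_sub_left x)).mul hh).integrable_of_hasCompactSupport
    (hasCompactSupport_comp_sub_mul hφc h x)

end CompactSupport

theorem integral_comp_sub_mul_of_periodic {g M : Euc d → ℝ} (hg : Continuous g)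
    (hgc : HasCompactSupport g) {c : ℝ} (hgper : ∀ y, ∑' ξ : ZLat d, g (y - latCast ξ) = c)
    (hM : Continuous M) (hMper : ∀ ξ z, M (z + latCast ξ) = M z) (x : Euc d) :
    ∫ z, g (x - z) * M z = c * ∫ u in unitCell d, M u := by
  rw [integral_eq_setIntegral_unitCell_tsum (F := fun z => g (x - z) * M z)
    ((hg.comp (continuous_sub_left x)).mul hM)
    (hasCompactSupport_comp_sub_mul hgc M x), ← integral_const_mul]
  congr 1
  funext u
  rw [← hgper (x - u), ← _root_.tsum_mul_right]
  exact tsum_congr fun ξ => by rw [hMper, sub_add_eq_sub_sub]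

lemma real_inner_eq_sum (b v : Euc d) : ⟪b, v⟫ = ∑ i, b i * v i := by
  simp [PiLp.inner_apply, mul_comm]

def ReproducesAffine (φ : Euc d → ℝ) : Prop :=
  ∀ (a : ℝ) (b x : Euc d), quasiInterp φ (fun v => a + ⟪b, v⟫) x = a + ⟪b, x⟫

lemma IsZ123.reproducesAffine {ζ : Euc d → ℝ} (hζ : IsZ123 ζ) : ReproducesAffine ζ := by
  intro a b x
  simp only [quasiInterp, real_inner_eq_sum, latCast_apply]
  rw [← hζ.ord a b x]
  exact tsum_congr fun ξ => mul_comm _ _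

namespace ReproducesAffine

variable {φ : Euc d → ℝ} (hφ : ReproducesAffine φ)
include hφ

lemma quasiInterp_one (z : Euc d) : quasiInterp φ (fun _ => 1) z = 1 := by
  simpa using hφ 1 0 z

lemma quasiInterp_inner_sub (b c z : Euc d) :
    quasiInterp φ (fun v => ⟪b, v - c⟫) z = ⟪b, z - c⟫ := by
  simpa only [inner_sub_right, neg_add_eq_sub] using hφ (-⟪b, c⟫) b z

end ReproducesAffine

/-- Multi-index moments are encoded by products of linear forms `⟪b k, ·⟫` over `k ∈ s`: the
monomial `ξ ↦ ξ^n` is such a product, with `b` a standard basis vector repeated `n i` times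
(`monomialFactors`). `latticeMoment φ b s c` is the moment about the centre `c`. -/
def latticeMoment {ι : Type*} (φ : Euc d → ℝ) (b : ι → Euc d) (s : Finset ι) (c : Euc d) :
    Euc d → ℝ :=
  quasiInterp φ fun v => ∏ k ∈ s, ⟪b k, v - c⟫

section Moments

variable {ι : Type*} {φ : Euc d → ℝ} (b : ι → Euc d)

lemma latticeMoment_recenter [DecidableEq ι] (hφ : HasCompactSupport φ) (s : Finset ι)
    (c c' z : Euc d) :
    latticeMoment φ b s c z =
      ∑ t ∈ s.powerset, (∏ k ∈ s \ t, ⟪b k, c' - c⟫) * latticeMoment φ b t c' z := by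
  have hsplit : ∀ v, ∏ k ∈ s, ⟪b k, v - c⟫ =
      ∑ t ∈ s.powerset, (∏ k ∈ s \ t, ⟪b k, c' - c⟫) * ∏ k ∈ t, ⟪b k, v - c'⟫ := fun v => by
    simp_rw [← sub_add_sub_cancel v c' c, inner_add_right, Finset.prod_add, mul_comm]
  simp_rw [latticeMoment, hsplit]
  exact quasiInterp_finsetSum hφ _ _ _ z

lemma latticeMoment_self_add_latCast (s : Finset ι) (η : ZLat d) (z : Euc d) :
    latticeMoment φ b s (z + latCast η) (z + latCast η) = latticeMoment φ b s z z := by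
  rw [latticeMoment, quasiInterp, ← (Equiv.addRight η).tsum_eq]
  simp only [Equiv.coe_addRight, latCast_add, add_sub_add_right_eq_sub]
  rfl

lemma continuous_latticeMoment_self (hφ : Continuous φ) (hφc : HasCompactSupport φ)
    (s : Finset ι) : Continuous fun z => latticeMoment φ b s z z :=
  continuous_tsum_mul_comp_sub_latCast hφ hφc fun ξ => by fun_prop

namespace ReproducesAffine

variable {b} (hφ : ReproducesAffine φ)
include hφ

lemma latticeMoment_empty (c z : Euc d) : latticeMoment φ b ∅ c z = 1 := by
  simpa [latticeMoment] using hφ.quasiInterp_one z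

lemma latticeMoment_singleton (k : ι) (c z : Euc d) :
    latticeMoment φ b {k} c z = ⟪b k, z - c⟫ := by
  simpa [latticeMoment] using hφ.quasiInterp_inner_sub (b k) c z

lemma latticeMoment_self_eq_of_card_le_one {s : Finset ι} (hs : s.card ≤ 1) (z z' : Euc d) :
    latticeMoment φ b s z z = latticeMoment φ b s z' z' := by
  rcases Nat.le_one_iff_eq_zero_or_eq_one.1 hs with h | h
  · simp [Finset.card_eq_zero.1 h, hφ.latticeMoment_empty]
  · obtain ⟨k, rfl⟩ := Finset.card_eq_one.1 h
    simp [hφ.latticeMoment_singleton]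

end ReproducesAffine

end Moments

lemma convAuto_sub_eq_integral (ζ : Euc d → ℝ) (x v : Euc d) :
    convAuto ζ (x - v) = ∫ z, ζ (x - z) * ζ (z - v) := by
  rw [convAuto, ← integral_sub_right_eq_self _ v]
  simp only [sub_sub_sub_cancel_right]

section Convolution

variable {ζ : Euc d → ℝ}

lemma hasCompactSupport_convAuto (hζ : HasCompactSupport ζ) : HasCompactSupport (convAuto ζ) := by
  have h : convAuto ζ = convolution ζ ζ (ContinuousLinearMap.lsmul ℝ ℝ) volume := by
    ext x
    simp [convAuto, convolution_def, mul_comm]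
  exact h ▸ hζ.convolution _ hζ

lemma quasiInterp_convAuto (hζ : Continuous ζ) (hζc : HasCompactSupport ζ) (f : Euc d → ℝ)
    (x : Euc d) : quasiInterp (convAuto ζ) f x = ∫ z, ζ (x - z) * quasiInterp ζ f z := by
  have hB : IsBounded {z | ζ (x - z) ≠ 0} :=
    (isBounded_singleton.sub hζc.isCompact.isBounded).subset fun z hz =>
      ⟨x, rfl, x - z, subset_tsupport ζ hz, sub_sub_cancel x z⟩
  obtain ⟨T, hT⟩ := exists_finset_comp_sub_latCast_eq_zero hζc hB
  have hvanish : ∀ ξ ∉ T, ∀ z, ζ (x - z) * (f (latCast ξ) * ζ (z - latCast ξ)) = 0 :=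
    fun ξ hξ z => by
      by_cases h : ζ (x - z) = 0
      · rw [h, zero_mul]
      · rw [hT ξ hξ z h, mul_zero, mul_zero]
  have hterm : ∀ ξ : ZLat d, f (latCast ξ) * convAuto ζ (x - latCast ξ) =
      ∫ z, ζ (x - z) * (f (latCast ξ) * ζ (z - latCast ξ)) := fun ξ => by
    rw [convAuto_sub_eq_integral, ← integral_const_mul]
    exact integral_congr_ae (Filter.Eventually.of_forall fun z => by ring)
  simp only [quasiInterp, tsum_congr hterm, ← _root_.tsum_mul_left]
  refine integral_tsum_of_summable_integral_norm (fun ξ => ?_) ?_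
  · exact integrable_comp_sub_mul hζ hζc (continuous_const.mul (hζ.comp (continuous_sub_right _))) x
  · exact summable_of_ne_finset_zero (s := T) fun ξ hξ => by simp [hvanish ξ hξ]

end Convolution

def affineFunctions (d : ℕ) : Submodule ℝ (Euc d → ℝ) where
  carrier := {f | ∃ (c : ℝ) (g : Fin d → ℝ), ∀ x, f x = c + ∑ i, g i * x i}
  add_mem' := by
    rintro f f' ⟨c, g, hf⟩ ⟨c', g', hf'⟩
    exact ⟨c + c', g + g', fun x => by
      simp only [Pi.add_apply, hf, hf', add_mul, Finset.sum_add_distrib]; ring⟩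
  zero_mem' := ⟨0, 0, by simp⟩
  smul_mem' := by
    rintro a f ⟨c, g, hf⟩
    exact ⟨a * c, a • g, fun x => by
      simp only [Pi.smul_apply, smul_eq_mul, hf, mul_add, Finset.mul_sum, mul_assoc]⟩

lemma mem_affineFunctions {f : Euc d → ℝ} :
    f ∈ affineFunctions d ↔ ∃ (c : ℝ) (g : Fin d → ℝ), ∀ x, f x = c + ∑ i, g i * x i :=
  Iff.rfl

lemma prod_inner_mem_affineFunctions {ι : Type*} (b : ι → Euc d) {s : Finset ι}
    (hs : s.card ≤ 1) : (fun x => ∏ k ∈ s, ⟪b k, x⟫) ∈ affineFunctions d := by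
  rcases Nat.le_one_iff_eq_zero_or_eq_one.1 hs with h | h
  · exact ⟨1, 0, by simp [Finset.card_eq_zero.1 h]⟩
  · obtain ⟨k, rfl⟩ := Finset.card_eq_one.1 h
    exact ⟨0, b k, by simp [real_inner_eq_sum]⟩

namespace IsZ123

variable {ζ : Euc d → ℝ} (hζ : IsZ123 ζ)
include hζ

lemma continuous : Continuous ζ := hζ.lip.choose_spec.continuous

lemma integral_comp_sub (x : Euc d) : ∫ z, ζ (x - z) = 1 := by
  have h := integral_comp_sub_mul_of_periodic (M := fun _ => 1) hζ.continuous hζ.cpt (c := 1)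
    (fun y => by simpa [quasiInterp] using hζ.reproducesAffine.quasiInterp_one y)
    continuous_const (fun _ _ => rfl) x
  simpa [Measure.real, volume_unitCell] using h

lemma integral_comp_sub_mul_inner_sub (b x : Euc d) : ∫ z, ζ (x - z) * ⟪b, z - x⟫ = 0 := by
  have h := integral_comp_sub_mul_of_periodic (g := fun y => ζ y * ⟪b, -y⟫) (M := fun _ => 1)
    (hζ.continuous.mul (by fun_prop)) hζ.cpt.mul_right (c := 0)
    (fun y => by
      have h := hζ.reproducesAffine.quasiInterp_inner_sub b y y
      rw [sub_self, inner_zero_right] at h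
      rw [← h]
      exact tsum_congr fun ξ => by rw [neg_sub, mul_comm])
    continuous_const (fun _ _ => rfl) x
  simpa [neg_sub] using h

theorem reproducesAffine_convAuto : ReproducesAffine (convAuto ζ) := by
  intro a b x
  have hsplit : ∀ z, ζ (x - z) * (a + ⟪b, z⟫) =
      (a + ⟪b, x⟫) * ζ (x - z) + ζ (x - z) * ⟪b, z - x⟫ := fun z => by
    rw [inner_sub_right]; ring
  rw [quasiInterp_convAuto hζ.continuous hζ.cpt]
  simp_rw [hζ.reproducesAffine a b, hsplit]
  rw [integral_add, integral_const_mul, hζ.integral_comp_sub, hζ.integral_comp_sub_mul_inner_sub,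
    mul_one, add_zero]
  · exact ((hζ.continuous.integrable_of_hasCompactSupport hζ.cpt).comp_sub_left x).const_mul _
  · exact integrable_comp_sub_mul hζ.continuous hζ.cpt (by fun_prop) x

variable {ι : Type*} (b : ι → Euc d)

lemma integral_mul_latticeMoment_self_eq {u t : Finset ι} (hut : u.card ≤ 1 ∨ t.card ≤ 1)
    (x x' : Euc d) :
    ∫ z, ζ (x - z) * ((∏ k ∈ u, ⟪b k, z - x⟫) * latticeMoment ζ b t z z) =
      ∫ z, ζ (x' - z) * ((∏ k ∈ u, ⟪b k, z - x'⟫) * latticeMoment ζ b t z z) := by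
  set g : Euc d → ℝ := fun y => ζ y * ∏ k ∈ u, ⟪b k, -y⟫
  have hg : ∀ x z, ζ (x - z) * ((∏ k ∈ u, ⟪b k, z - x⟫) * latticeMoment ζ b t z z) =
      g (x - z) * latticeMoment ζ b t z z := fun x z => by simp only [g, neg_sub, mul_assoc]
  have hgc : Continuous g := hζ.continuous.mul (by fun_prop)
  simp only [hg]
  rcases hut with hu | ht
  · have hper : ∀ y, ∑' ξ : ZLat d, g (y - latCast ξ) = latticeMoment ζ b u 0 0 := fun y => by
      rw [← hζ.reproducesAffine.latticeMoment_self_eq_of_card_le_one hu y 0]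
      exact tsum_congr fun ξ => by simp only [g, neg_sub, mul_comm]
    have hM := continuous_latticeMoment_self b hζ.continuous hζ.cpt t
    rw [integral_comp_sub_mul_of_periodic hgc hζ.cpt.mul_right hper hM
        (latticeMoment_self_add_latCast b t) x,
      integral_comp_sub_mul_of_periodic hgc hζ.cpt.mul_right hper hM
        (latticeMoment_self_add_latCast b t) x']
  · have h : ∀ x, ∫ z, g (x - z) * latticeMoment ζ b t z z =
        (∫ y, g y) * latticeMoment ζ b t 0 0 := fun x => by
      rw [← integral_sub_left_eq_self g volume x, ← integral_mul_const]
      congr 1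
      funext z
      rw [hζ.reproducesAffine.latticeMoment_self_eq_of_card_le_one ht z 0]
    rw [h, h]

theorem latticeMoment_convAuto_self_eq {s : Finset ι} (hs : s.card ≤ 3) (x : Euc d) :
    latticeMoment (convAuto ζ) b s x x = latticeMoment (convAuto ζ) b s 0 0 := by
  classical
  have hexpand : ∀ x, latticeMoment (convAuto ζ) b s x x = ∑ t ∈ s.powerset,
      ∫ z, ζ (x - z) * ((∏ k ∈ s \ t, ⟪b k, z - x⟫) * latticeMoment ζ b t z z) := fun x => by
    rw [latticeMoment, quasiInterp_convAuto hζ.continuous hζ.cpt, ← integral_finsetSum]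
    · refine integral_congr_ae (Filter.Eventually.of_forall fun z => ?_)
      change ζ (x - z) * latticeMoment ζ b s x z = _
      rw [latticeMoment_recenter b hζ.cpt s x z z, Finset.mul_sum]
    · exact fun t _ => integrable_comp_sub_mul hζ.continuous hζ.cpt
        ((by fun_prop : Continuous fun z => ∏ k ∈ s \ t, ⟪b k, z - x⟫).mul
          (continuous_latticeMoment_self b hζ.continuous hζ.cpt t)) x
  rw [hexpand x, hexpand 0]
  refine Finset.sum_congr rfl fun t ht => hζ.integral_mul_latticeMoment_self_eq b ?_ x 0
  have := Finset.card_sdiff_add_card_eq_card (Finset.mem_powerset.1 ht)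
  omega

theorem quasiInterp_convAuto_prod_inner_sub_mem {ι : Type*} (b : ι → Euc d) {s : Finset ι}
    (hs : s.card ≤ 3) :
    (fun x => quasiInterp (convAuto ζ) (fun v => ∏ k ∈ s, ⟪b k, v⟫) x - ∏ k ∈ s, ⟪b k, x⟫) ∈
      affineFunctions d := by
  classical
  have hA := hζ.reproducesAffine_convAuto
  have hexpand : ∀ x, quasiInterp (convAuto ζ) (fun v => ∏ k ∈ s, ⟪b k, v⟫) x =
      ∑ t ∈ s.powerset, (∏ k ∈ s \ t, ⟪b k, x⟫) * latticeMoment (convAuto ζ) b t x x := fun x => by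
    simpa [latticeMoment] using
      latticeMoment_recenter b (hasCompactSupport_convAuto hζ.cpt) s 0 x x
  have hterm : ∀ t ∈ s.powerset.erase ∅,
      (fun x => (∏ k ∈ s \ t, ⟪b k, x⟫) * latticeMoment (convAuto ζ) b t x x) ∈
        affineFunctions d := by
    intro t ht
    obtain ⟨ht0, hts⟩ := Finset.mem_erase.1 ht
    have hts := Finset.mem_powerset.1 hts
    by_cases ht1 : t.card = 1
    · obtain ⟨k, rfl⟩ := Finset.card_eq_one.1 ht1
      simp only [hA.latticeMoment_singleton, sub_self, inner_zero_right, mul_zero]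
      exact (affineFunctions d).zero_mem
    · have hst : (s \ t).card ≤ 1 := by
        have := Finset.card_sdiff_add_card_eq_card hts
        have := Finset.card_pos.2 (Finset.nonempty_iff_ne_empty.2 ht0)
        omega
      simp_rw [hζ.latticeMoment_convAuto_self_eq b ((Finset.card_le_card hts).trans hs), mul_comm _
        (latticeMoment (convAuto ζ) b t 0 0)]
      exact (affineFunctions d).smul_mem _ (prod_inner_mem_affineFunctions b hst)
  have hsum : (fun x => quasiInterp (convAuto ζ) (fun v => ∏ k ∈ s, ⟪b k, v⟫) x -
      ∏ k ∈ s, ⟪b k, x⟫) = ∑ t ∈ s.powerset.erase ∅,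
        fun x => (∏ k ∈ s \ t, ⟪b k, x⟫) * latticeMoment (convAuto ζ) b t x x := by
    funext x
    rw [Finset.sum_apply, hexpand, ← Finset.add_sum_erase _ _ (Finset.empty_mem_powerset s),
      hA.latticeMoment_empty, Finset.sdiff_empty, mul_one, add_sub_cancel_left]
  rw [hsum]
  exact Submodule.sum_mem _ hterm

end IsZ123

def monomialFactors (n : Fin d →₀ ℕ) : Finset ((_ : Fin d) × ℕ) :=
  Finset.univ.sigma fun i => Finset.range (n i)

lemma eval_eq_sum_prod_inner (P : MvPolynomial (Fin d) ℝ) (v : Euc d) :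
    MvPolynomial.eval (fun i => v i) P = ∑ n ∈ P.support, P.coeff n *
      ∏ k ∈ monomialFactors n, ⟪EuclideanSpace.single k.1 1, v⟫ := by
  rw [MvPolynomial.eval_eq']
  refine Finset.sum_congr rfl fun n _ => ?_
  simp [monomialFactors, Finset.prod_sigma, EuclideanSpace.inner_single_left]

theorem IsZ123.quasiInterp_convAuto_eval_sub_mem {ζ : Euc d → ℝ} (hζ : IsZ123 ζ)
    {P : MvPolynomial (Fin d) ℝ} (hP : P.totalDegree ≤ 3) :
    (fun x => quasiInterp (convAuto ζ) (fun v => MvPolynomial.eval (fun i => v i) P) x -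
      MvPolynomial.eval (fun i => x i) P) ∈ affineFunctions d := by
  have hdeg : ∀ n ∈ P.support, (monomialFactors n).card ≤ 3 := fun n hn => by
    simpa [monomialFactors, Finset.card_sigma, Finsupp.sum_fintype] using
      (MvPolynomial.le_totalDegree hn).trans hP
  have hsum : (fun x => quasiInterp (convAuto ζ) (fun v => MvPolynomial.eval (fun i => v i) P) x -
      MvPolynomial.eval (fun i => x i) P) = ∑ n ∈ P.support, P.coeff n • fun x =>
        quasiInterp (convAuto ζ) (fun v => ∏ k ∈ monomialFactors n,
          ⟪EuclideanSpace.single k.1 1, v⟫) x -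
        ∏ k ∈ monomialFactors n, ⟪EuclideanSpace.single k.1 1, x⟫ := by
    funext x
    simp only [eval_eq_sum_prod_inner, quasiInterp_finsetSum (hasCompactSupport_convAuto hζ.cpt),
      Finset.sum_apply, Pi.smul_apply, smul_eq_mul, mul_sub, Finset.sum_sub_distrib]
  rw [hsum]
  exact Submodule.sum_mem _ fun n hn =>
    Submodule.smul_mem _ _ (hζ.quasiInterp_convAuto_prod_inner_sub_mem _ (hdeg n hn))

theorem qinterp_basis_difference_affine_general (d : ℕ)
    (ζ₁ ζ₂ : Euc d → ℝ) (h₁ : IsZ123 ζ₁) (h₂ : IsZ123 ζ₂)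
    (P : MvPolynomial (Fin d) ℝ) (hP : P.totalDegree ≤ 3) :
    ∃ (c : ℝ) (g : Fin d → ℝ), ∀ x : Euc d,
      (∑' ξ : ZLat d, MvPolynomial.eval (fun i => (ξ i : ℝ)) P *
          (convAuto ζ₂ (x - latCast ξ) - convAuto ζ₁ (x - latCast ξ))) =
        c + ∑ i, g i * x i := by
  obtain ⟨c, g, hcg⟩ := mem_affineFunctions.1 <|
    sub_mem (h₂.quasiInterp_convAuto_eval_sub_mem hP) (h₁.quasiInterp_convAuto_eval_sub_mem hP)
  refine ⟨c, g, fun x => ?_⟩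
  rw [← hcg x, Pi.sub_apply]
  change quasiInterp (fun y => convAuto ζ₂ y - convAuto ζ₁ y)
    (fun v => MvPolynomial.eval (fun i => v i) P) x = _
  rw [quasiInterp_sub (hasCompactSupport_convAuto h₁.cpt) (hasCompactSupport_convAuto h₂.cpt)]
  ring

/-- Lemma 5.4: if `ζ₁, ζ₂` satisfy (Z1)–(Z3) and `ζ̃ᵢ = ζᵢ ∗ ζᵢ`, then for
every polynomial `p` of total degree at most `3`, the function
`x ↦ ∑_{ξ∈ℤ^d} p(ξ)(ζ̃₂(x−ξ) − ζ̃₁(x−ξ))` is affine, i.e. of the form `c + g·x`. -/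
theorem qinterp_basis_difference_affine (d : ℕ) (hd : 0 < d)
    (ζ₁ ζ₂ : Euc d → ℝ) (h₁ : IsZ123 ζ₁) (h₂ : IsZ123 ζ₂)
    (P : MvPolynomial (Fin d) ℝ) (hP : P.totalDegree ≤ 3) :
    ∃ (c : ℝ) (g : Fin d → ℝ), ∀ x : Euc d,
      (∑' ξ : ZLat d, MvPolynomial.eval (fun i => (ξ i : ℝ)) P *
          (convAuto ζ₂ (x - latCast ξ) - convAuto ζ₁ (x - latCast ξ))) =
        c + ∑ i, g i * x i :=
  qinterp_basis_difference_affine_general d ζ₁ ζ₂ h₁ h₂ P hP
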